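/- Let N = 2, let B be a ball with closure contained in the open right half-plane {(x,y) ∈ ℝ² : x > 0}, and let u(x,y) = arctan(y/x). Then for every (not necessarily convex) F ∈ C²((0,+∞)), setting DF(w) := F'(|w|)·w/|w| for w ≠ 0, the function u satisfies div(DF(Du)) = 0 pointwise in B; equivalently, the matrix D²F(Du(z))·D²u(z) has zero trace for every z ∈ B, where D²F(w) = F''(|w|)·(w/|w|)⊗(w/|w|) + (F'(|w|)/|w|)·(I − (w/|w|)⊗(w/|w|)). -/

import Mathlib

/-!
On the right half-plane `Du(z) = J z / |z|²`, where `J` is the rotation by a right angle, so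
`|Du(z)| = 1 / |z|` and `DF(Du)(z) = g(|z|²) J z` with `g(t) = F'(t^{-1/2}) t^{-1/2}`.
For any differentiable `g`, the divergence of `z ↦ g(|z|²) A z` is
`2 g'(|z|²) ⟪z, A z⟫ + g(|z|²) tr A`, and both terms vanish when `A` is skew, as `J` is.
-/

open MeasureTheory

/-- The angle function `u(x,y) = arctan(y/x)` on the right half-plane. -/
noncomputable def angleFun (x : EuclideanSpace ℝ (Fin 2)) : ℝ :=
  Real.arctan (x 1 / x 0)

/-- The stress field `DF(Du)(z) = F'(|Du(z)|) Du(z)/|Du(z)|` associated to a radial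
integrand `F` and to the function `u = arctan(y/x)`. -/
noncomputable def stressField (F : ℝ → ℝ) (z : EuclideanSpace ℝ (Fin 2)) :
    EuclideanSpace ℝ (Fin 2) :=
  (deriv F ‖gradient angleFun z‖ / ‖gradient angleFun z‖) • gradient angleFun z

open scoped RealInnerProductSpace

theorem hasFDerivAt_comp_norm_sq {E : Type*} [NormedAddCommGroup E] [InnerProductSpace ℝ E]
    {g : ℝ → ℝ} {z : E} (hg : DifferentiableAt ℝ g (‖z‖ ^ 2)) :
    HasFDerivAt (fun w => g (‖w‖ ^ 2)) (deriv g (‖z‖ ^ 2) • (2 • innerSL ℝ z)) z :=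
  hg.hasDerivAt.comp_hasFDerivAt z (hasStrictFDerivAt_norm_sq z).hasFDerivAt

section Divergence

variable {ι : Type*} [Fintype ι] [DecidableEq ι]

noncomputable def divergence (f : EuclideanSpace ℝ ι → EuclideanSpace ℝ ι)
    (z : EuclideanSpace ℝ ι) : ℝ :=
  ∑ i, fderiv ℝ f z (EuclideanSpace.single i 1) i

theorem Filter.EventuallyEq.divergence_eq {f g : EuclideanSpace ℝ ι → EuclideanSpace ℝ ι}
    {z : EuclideanSpace ℝ ι} (h : f =ᶠ[nhds z] g) : divergence f z = divergence g z := by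
  simp only [divergence, h.fderiv_eq]

theorem divergence_smul {φ : EuclideanSpace ℝ ι → ℝ}
    {f : EuclideanSpace ℝ ι → EuclideanSpace ℝ ι} {z : EuclideanSpace ℝ ι}
    (hφ : DifferentiableAt ℝ φ z) (hf : DifferentiableAt ℝ f z) :
    divergence (fun w => φ w • f w) z = fderiv ℝ φ z (f z) + φ z * divergence f z := by
  have hfz : f z = ∑ i, f z i • EuclideanSpace.single i (1 : ℝ) := by
    simpa using ((EuclideanSpace.basisFun ι ℝ).sum_repr (f z)).symm
  conv_rhs => rw [hfz]
  simp only [divergence, fderiv_fun_smul hφ hf, add_apply, smul_apply,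
    ContinuousLinearMap.smulRight_apply, PiLp.add_apply, PiLp.smul_apply, smul_eq_mul, mul_comm,
    Finset.sum_add_distrib, map_sum, map_smul, Finset.mul_sum]
  exact add_comm _ _

theorem divergence_clm_of_inner_self_eq_zero (A : EuclideanSpace ℝ ι →L[ℝ] EuclideanSpace ℝ ι)
    (hA : ∀ v, ⟪v, A v⟫ = 0) (z : EuclideanSpace ℝ ι) : divergence A z = 0 := by
  refine Finset.sum_eq_zero fun i _ => ?_
  simpa [EuclideanSpace.inner_single_left] using hA (EuclideanSpace.single i 1)

theorem divergence_radial_smul_eq_zero {g : ℝ → ℝ} {z : EuclideanSpace ℝ ι}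
    (hg : DifferentiableAt ℝ g (‖z‖ ^ 2))
    (A : EuclideanSpace ℝ ι →L[ℝ] EuclideanSpace ℝ ι) (hA : ∀ v, ⟪v, A v⟫ = 0) :
    divergence (fun w => g (‖w‖ ^ 2) • A w) z = 0 := by
  have hφ := hasFDerivAt_comp_norm_sq hg
  rw [divergence_smul hφ.differentiableAt A.differentiableAt, hφ.fderiv,
    divergence_clm_of_inner_self_eq_zero A hA]
  simp [hA]

end Divergence

theorem norm_sq_eq_fin_two (v : EuclideanSpace ℝ (Fin 2)) : ‖v‖ ^ 2 = v 0 ^ 2 + v 1 ^ 2 := by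
  simp [EuclideanSpace.norm_sq_eq, Fin.sum_univ_two]

noncomputable def quarterTurn : EuclideanSpace ℝ (Fin 2) →L[ℝ] EuclideanSpace ℝ (Fin 2) :=
  Matrix.toEuclideanCLM (𝕜 := ℝ) !![0, -1; 1, 0]

theorem quarterTurn_apply_zero (v : EuclideanSpace ℝ (Fin 2)) : quarterTurn v 0 = -v 1 := by
  simp [quarterTurn, Matrix.vecHead, Matrix.vecTail]

theorem quarterTurn_apply_one (v : EuclideanSpace ℝ (Fin 2)) : quarterTurn v 1 = v 0 := by
  simp [quarterTurn, Matrix.vecHead, Matrix.vecTail]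

theorem inner_quarterTurn_self (v : EuclideanSpace ℝ (Fin 2)) : ⟪v, quarterTurn v⟫ = 0 := by
  simp only [EuclideanSpace.inner_eq_star_dotProduct, dotProduct, Pi.star_apply, star_trivial,
    Fin.sum_univ_two, quarterTurn_apply_zero, quarterTurn_apply_one]
  ring

theorem norm_quarterTurn (v : EuclideanSpace ℝ (Fin 2)) : ‖quarterTurn v‖ = ‖v‖ := by
  simp [EuclideanSpace.norm_eq, Fin.sum_univ_two, quarterTurn_apply_zero, quarterTurn_apply_one,
    add_comm]

theorem hasGradientAt_angleFun {z : EuclideanSpace ℝ (Fin 2)} (hz : z 0 ≠ 0) :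
    HasGradientAt angleFun ((‖z‖ ^ 2)⁻¹ • quarterTurn z) z := by
  have hquot := (EuclideanSpace.proj (𝕜 := ℝ) (1 : Fin 2)).hasFDerivAt (x := z) |>.mul
    ((hasDerivAt_inv hz).comp_hasFDerivAt z (EuclideanSpace.proj (𝕜 := ℝ) (0 : Fin 2)).hasFDerivAt)
  rw [hasGradientAt_iff_hasFDerivAt]
  -- `x 1 / x 0` is definitionally `x 1 * (x 0)⁻¹`, so `hquot.arctan` is a derivative of `angleFun`
  refine HasFDerivAt.congr_fderiv (f := angleFun) hquot.arctan ?_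
  ext v
  simp only [EuclideanSpace.coe_proj, Pi.mul_apply, Function.comp_apply, one_div,
    PiLp.proj_apply, neg_smul, smul_neg, smul_add, add_apply, neg_apply, smul_apply, smul_eq_mul,
    norm_sq_eq_fin_two, map_smul, InnerProductSpace.toDual_apply_apply,
    EuclideanSpace.inner_eq_star_dotProduct, dotProduct, Pi.star_apply, star_trivial,
    Fin.sum_univ_two, quarterTurn_apply_zero, quarterTurn_apply_one]
  field_simp

theorem norm_gradient_angleFun {z : EuclideanSpace ℝ (Fin 2)} (hz : z 0 ≠ 0) :
    ‖gradient angleFun z‖ = ‖z‖⁻¹ := by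
  have hz' : ‖z‖ ≠ 0 := norm_ne_zero_iff.2 fun h => hz (by simp [h])
  rw [(hasGradientAt_angleFun hz).gradient, norm_smul, norm_quarterTurn, norm_inv, norm_pow,
    norm_norm]
  field_simp

noncomputable def stressCoeff (F : ℝ → ℝ) (t : ℝ) : ℝ :=
  deriv F (√t)⁻¹ * (√t)⁻¹

theorem stressField_eq {z : EuclideanSpace ℝ (Fin 2)} (F : ℝ → ℝ) (hz : z 0 ≠ 0) :
    stressField F z = stressCoeff F (‖z‖ ^ 2) • quarterTurn z := by
  have hz' : ‖z‖ ≠ 0 := norm_ne_zero_iff.2 fun h => hz (by simp [h])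
  rw [stressField, norm_gradient_angleFun hz, (hasGradientAt_angleFun hz).gradient, smul_smul,
    stressCoeff, Real.sqrt_sq (norm_nonneg z)]
  congr 1
  field_simp

theorem differentiableAt_stressCoeff {F : ℝ → ℝ} (hF : ContDiffOn ℝ 2 F (Set.Ioi 0)) {t : ℝ}
    (ht : 0 < t) : DifferentiableAt ℝ (stressCoeff F) t := by
  have hsqrt : DifferentiableAt ℝ (fun s => (√s)⁻¹) t :=
    (Real.hasDerivAt_sqrt ht.ne').differentiableAt.inv (by positivity)
  have hF' : DifferentiableAt ℝ (deriv F) (√t)⁻¹ :=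
    ((hF.deriv_of_isOpen isOpen_Ioi (m := 1) (by norm_num)).differentiableOn
      one_ne_zero).differentiableAt (Ioi_mem_nhds (by positivity))
  exact (hF'.comp t hsqrt).mul hsqrt

theorem stmt19_general (c : EuclideanSpace ℝ (Fin 2)) (r : ℝ)
    (hB : ∀ x ∈ Metric.closedBall c r, 0 < x 0)
    (F : ℝ → ℝ) (hF : ContDiffOn ℝ 2 F (Set.Ioi 0)) :
    ∀ z ∈ Metric.ball c r,
      DifferentiableAt ℝ (stressField F) z ∧
      ∑ i : Fin 2, fderiv ℝ (stressField F) z (EuclideanSpace.single i 1) i = 0 := by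
  intro z hz
  have hz0 : 0 < z 0 := hB z (Metric.ball_subset_closedBall hz)
  have hlocal : stressField F =ᶠ[nhds z] fun w => stressCoeff F (‖w‖ ^ 2) • quarterTurn w := by
    filter_upwards [(PiLp.continuous_apply 2 _ 0).isOpen_preimage _ isOpen_Ioi |>.mem_nhds hz0]
      with w hw using stressField_eq F (ne_of_gt hw)
  have hcoeff : DifferentiableAt ℝ (stressCoeff F) (‖z‖ ^ 2) :=
    differentiableAt_stressCoeff hF (by rw [norm_sq_eq_fin_two]; positivity)
  constructor
  · exact ((hasFDerivAt_comp_norm_sq hcoeff).differentiableAt.smul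
      quarterTurn.differentiableAt).congr_of_eventuallyEq hlocal
  · change divergence (stressField F) z = 0
    rw [hlocal.divergence_eq]
    exact divergence_radial_smul_eq_zero hcoeff quarterTurn inner_quarterTurn_self

/-- Let `B` be a ball whose closure is contained in the open right
half-plane `{x > 0} ⊂ ℝ²`, and let `u(x,y) = arctan(y/x)`. For every `F ∈ C²((0,∞))`
(not necessarily convex), setting `DF(w) = F'(|w|) w/|w|`, the field `V = DF(Du)` is
differentiable on `B` with `div V = 0` pointwise in `B` (equivalently, the matrix
`D²F(Du) D²u` has zero trace on `B`). -/
theorem stmt19 (c : EuclideanSpace ℝ (Fin 2)) (r : ℝ) (hr : 0 < r)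
    (hB : ∀ x ∈ Metric.closedBall c r, 0 < x 0)
    (F : ℝ → ℝ) (hF : ContDiffOn ℝ 2 F (Set.Ioi 0)) :
    ∀ z ∈ Metric.ball c r,
      DifferentiableAt ℝ (stressField F) z ∧
      ∑ i : Fin 2, fderiv ℝ (stressField F) z (EuclideanSpace.single i 1) i = 0 :=
  stmt19_general c r hB F hF
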